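/- Suppose δ_e is invertible. The map ρ⁻ removing the central cup and cap extends to an algebra isomorphism from the idempotent subalgebra (e'/δ_e) b'_{2m}(δ, δ_e, κ) (e'/δ_e) onto b'_{2m−2}(δ, κ, δ_e); in particular the roles of the parameters δ_e and κ are interchanged. -/

import Mathlib

/-!
STATEMENT 12.
Suppose `δ_e` is invertible.  In the achiral algebra `b'_{2m}(δ, δ_e, κ)` (modelled by
its fundamental right-half strips, `WBasic` strip diagrams, with structure constants
`wCoeff`: `δ` per mirror pair of loops, `δ_e` per white centre-crossing loop, `κ` per
black centre-crossing loop), the diagrams containing the central cup and cap are exactly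
the strips with `dest 0 = west` and `dest (2m−1) = west` (`CupCap`); normalised by
`1/δ_e`, they form a basis of the idempotent subalgebra `(e'/δ_e) b'_{2m} (e'/δ_e)`.
The map `ρ⁻` removes the central cup and cap (`shrink`, deleting the two points adjacent
to the wall and shifting indices down by one).  The theorem: `ρ⁻` is a bijection onto
the basis of `b'_{2m−2}`, it intertwines the composites, and it matches the normalised
structure constants with the parameters `δ_e` and `κ` interchanged — i.e. `ρ⁻` extends
to an algebra isomorphism `(e'/δ_e) b'_{2m}(δ, δ_e, κ) (e'/δ_e) ≅ b'_{2m−2}(δ, κ, δ_e)`.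
-/

open scoped Classical

/-- Destination of a boundary point of a diagram drawn in the fundamental strip (between
the `0`-reflection wall `W` and the `1`-reflection wall `E`) of an affine symmetric
(periodic, left-right symmetric) Temperley–Lieb diagram: it is joined to another boundary
point, or exits through the `0`-wall (west) or the `1`-wall (east). -/
inductive SDest : Type
  | pt (j : ℕ) : SDest
  | west : SDest
  | east : SDest
deriving DecidableEq

/-- A strip diagram with `m` northern and `m` southern boundary points (circle indexing:
top `0, …, m−1` left to right, bottom `m, …, 2m−1` right to left), together with a number
of belts (non-contractible loops, drawn as wall-to-wall strands). This is the fundamental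
domain model of an affine symmetric TL diagram of period `2m`. -/
structure StripDiagram (m : ℕ) : Type where
  dest : ℕ → SDest
  belts : ℕ

/-- Two chords `{a,b}`, `{c,d}` on the boundary circle cross. -/
def chordsCross (a b c d : ℕ) : Prop :=
  (min a b < min c d ∧ min c d < max a b ∧ max a b < max c d) ∨
  (min c d < min a b ∧ min a b < max c d ∧ max c d < max a b)

/-- The chord `{c, j}` spans the eastern boundary gap (between points `m−1` and `m`). -/
def SContainsE (m c j : ℕ) : Prop := min c j < m ∧ m ≤ max c j

/-- Planarity/well-formedness of a strip diagram: matching strands are involutive and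
non-crossing, wall-exiting strands do not cross matching strands or each other, and
belts (wall-to-wall strands) are compatible with everything. -/
def StripWf (m : ℕ) (D : StripDiagram m) : Prop :=
  (∀ i, 2 * m ≤ i → D.dest i = SDest.pt i) ∧
  (∀ i j, i < 2 * m → D.dest i = SDest.pt j →
    j < 2 * m ∧ j ≠ i ∧ D.dest j = SDest.pt i) ∧
  (∀ i j i' j', i < 2 * m → i' < 2 * m → D.dest i = SDest.pt j →
    D.dest i' = SDest.pt j' → ¬ chordsCross i j i' j') ∧
  (∀ i c j, i < 2 * m → c < 2 * m → D.dest i = SDest.west →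
    D.dest c = SDest.pt j → ¬ (min c j < i ∧ i < max c j)) ∧
  (∀ i c j, i < 2 * m → c < 2 * m → D.dest i = SDest.east →
    D.dest c = SDest.pt j → ((min c j < i ∧ i < max c j) ↔ SContainsE m c j)) ∧
  (∀ i j, i < 2 * m → j < 2 * m → D.dest i = SDest.west → D.dest j = SDest.east →
    ¬ ((i < m ∧ j < i) ∨ (m ≤ i ∧ i < j))) ∧
  (1 ≤ D.belts → ∀ c j, c < 2 * m → D.dest c = SDest.pt j → ¬ SContainsE m c j)

/-- Colouring-composability: the numbers of `0`-wall and `1`-wall crossings (including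
belts) are even. -/
def CCcond (m : ℕ) (D : StripDiagram m) : Prop :=
  ({i : ℕ | i < 2 * m ∧ D.dest i = SDest.west}.ncard + D.belts) % 2 = 0 ∧
  ({i : ℕ | i < 2 * m ∧ D.dest i = SDest.east}.ncard + D.belts) % 2 = 0

/-- A basis diagram of the affine symmetric TL algebra `b^φ_{2m}`: a well-formed,
colouring-composable strip diagram with at most one belt (and none of the reducible
features, which the strip encoding cannot represent). -/
def SBasic (m : ℕ) (D : StripDiagram m) : Prop :=
  StripWf m D ∧ D.belts ≤ 1 ∧ CCcond m D

section Glue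

variable (m : ℕ) (D1 D2 : StripDiagram m)

/-- Point lookup in the two-layer concatenation of `D1` (layer `false`) over `D2`. -/
def ldest : Bool × ℕ → SDest := fun x => if x.1 then D2.dest x.2 else D1.dest x.2

/-- One step of connectivity in the concatenation: follow a strand of either layer, or
pass through the glued middle edge (bottom point `i` of `D1` is glued to top point
`2m−1−i` of `D2`). -/
inductive SStep : Bool × ℕ → Bool × ℕ → Prop
  | arc1 (i j : ℕ) (h : i < 2 * m) (hd : D1.dest i = SDest.pt j) :
      SStep (false, i) (false, j)
  | arc2 (i j : ℕ) (h : i < 2 * m) (hd : D2.dest i = SDest.pt j) :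
      SStep (true, i) (true, j)
  | glue (i : ℕ) (h1 : m ≤ i) (h2 : i < 2 * m) :
      SStep (false, i) (true, 2 * m - 1 - i)

/-- Connectivity in the concatenation. -/
def SConn : Bool × ℕ → Bool × ℕ → Prop := Relation.EqvGen (SStep m D1 D2)

/-- Boundary points of the concatenation: top of layer `1`, bottom of layer `2`. -/
def sBd (i : ℕ) : Bool × ℕ := if i < m then (false, i) else (true, i)

/-- `x` is a `0`-wall (west) end of the concatenation. -/
def isWEnd (x : Bool × ℕ) : Prop := x.2 < 2 * m ∧ ldest m D1 D2 x = SDest.west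

/-- `x` is a `1`-wall (east) end of the concatenation. -/
def isEEnd (x : Bool × ℕ) : Prop := x.2 < 2 * m ∧ ldest m D1 D2 x = SDest.east

/-- The component of `x` contains a boundary point of the concatenation. -/
def touchesBd (x : Bool × ℕ) : Prop := ∃ i, i < 2 * m ∧ SConn m D1 D2 x (sBd m i)

/-- Number of closed (contractible) loops formed in the concatenation: components
touching neither the boundary nor a wall, counted by their minimal middle point. -/
noncomputable def nLoops : ℕ :=
  {i : ℕ | m ≤ i ∧ i < 2 * m ∧ ¬ touchesBd m D1 D2 (false, i) ∧
    (¬ ∃ y, (isWEnd m D1 D2 y ∨ isEEnd m D1 D2 y) ∧ SConn m D1 D2 (false, i) y) ∧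
    (∀ j, m ≤ j → j < 2 * m → SConn m D1 D2 (false, i) (false, j) → i ≤ j)}.ncard

/-- The order of wall ends along a wall (layer `1` ends above layer `2` ends, and within
a layer in increasing circle index). -/
def lexLt (x y : Bool × ℕ) : Prop :=
  (x.1 = false ∧ y.1 = true) ∨ (x.1 = y.1 ∧ x.2 < y.2)

/-- Rank (from the top) of a west-wall end among all west-wall ends. -/
noncomputable def wRank (x : Bool × ℕ) : ℕ :=
  {y : Bool × ℕ | isWEnd m D1 D2 y ∧ lexLt y x}.ncard

/-- Rank of an east-wall end among all east-wall ends. -/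
noncomputable def eRank (x : Bool × ℕ) : ℕ :=
  {y : Bool × ℕ | isEEnd m D1 D2 y ∧ lexLt y x}.ncard

/-- `x` is the upper end of a loop astride the `0`-wall (a component with two west ends
and no boundary point). -/
def isWWTop (x : Bool × ℕ) : Prop :=
  isWEnd m D1 D2 x ∧ ¬ touchesBd m D1 D2 x ∧
  (¬ ∃ y, isEEnd m D1 D2 y ∧ SConn m D1 D2 x y) ∧
  (∀ y, isWEnd m D1 D2 y → SConn m D1 D2 x y → ¬ lexLt y x)

/-- `x` is the upper end of a loop astride the `1`-wall. -/
def isEETop (x : Bool × ℕ) : Prop :=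
  isEEnd m D1 D2 x ∧ ¬ touchesBd m D1 D2 x ∧
  (¬ ∃ y, isWEnd m D1 D2 y ∧ SConn m D1 D2 x y) ∧
  (∀ y, isEEnd m D1 D2 y → SConn m D1 D2 x y → ¬ lexLt y x)

/-- Number of white loops astride the `0`-wall (the region at the top of the `0`-wall is
white; the colour alternates with each wall crossing). -/
noncomputable def nWWwhite : ℕ :=
  {x : Bool × ℕ | isWWTop m D1 D2 x ∧ (wRank m D1 D2 x + 1) % 2 = 0}.ncard

/-- Number of black loops astride the `0`-wall. -/
noncomputable def nWWblack : ℕ :=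
  {x : Bool × ℕ | isWWTop m D1 D2 x ∧ (wRank m D1 D2 x + 1) % 2 = 1}.ncard

/-- Number of white loops astride the `1`-wall (the colour at the top of the `1`-wall
depends on the parity of `m`). -/
noncomputable def nEEwhite : ℕ :=
  {x : Bool × ℕ | isEETop m D1 D2 x ∧ (eRank m D1 D2 x + 1 + m) % 2 = 0}.ncard

/-- Number of black loops astride the `1`-wall. -/
noncomputable def nEEblack : ℕ :=
  {x : Bool × ℕ | isEETop m D1 D2 x ∧ (eRank m D1 D2 x + 1 + m) % 2 = 1}.ncard

/-- Number of new noncontractible loops (wall-to-wall strands) formed in the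
concatenation, counted by their west ends. -/
noncomputable def nWE : ℕ :=
  {x : Bool × ℕ | isWEnd m D1 D2 x ∧ ¬ touchesBd m D1 D2 x ∧
    ∃ y, isEEnd m D1 D2 y ∧ SConn m D1 D2 x y}.ncard

/-- The destination function of the composite diagram. -/
noncomputable def compDest : ℕ → SDest := fun i =>
  if i < 2 * m then
    if h : ∃ j, j < 2 * m ∧ j ≠ i ∧ SConn m D1 D2 (sBd m i) (sBd m j) then
      SDest.pt (Classical.choose h)
    else if ∃ y, isWEnd m D1 D2 y ∧ SConn m D1 D2 (sBd m i) y then SDest.west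
    else SDest.east
  else SDest.pt i

/-- Number of pairs of noncontractible loops removed (each contributing `κ_{LR}`). -/
noncomputable def beltPairs : ℕ := (D1.belts + D2.belts + nWE m D1 D2) / 2

/-- The composite (basic) diagram of the concatenation. -/
noncomputable def compStrip : StripDiagram m :=
  ⟨compDest m D1 D2, (D1.belts + D2.belts + nWE m D1 D2) % 2⟩

end Glue

/-- The scalar produced by reducing the features of the concatenation of two basic
diagrams, with parameters `δ, δ_L, δ_R, κ_L, κ_R, κ_{LR}`. -/
noncomputable def sCoeff {k : Type} [CommRing k] (δ δL δR κL κR κLR : k)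
    (m : ℕ) (D1 D2 : StripDiagram m) : k :=
  δ ^ nLoops m D1 D2 * δL ^ nWWwhite m D1 D2 * κL ^ nWWblack m D1 D2 *
    δR ^ nEEwhite m D1 D2 * κR ^ nEEblack m D1 D2 * κLR ^ beltPairs m D1 D2


/-- The coefficient of the achiral algebra `b'_{2m}(δ, δ_e, κ)`. -/
noncomputable def wCoeff {k : Type} [CommRing k] (δ δe κ : k)
    (m : ℕ) (D1 D2 : StripDiagram m) : k :=
  δ ^ nLoops m D1 D2 * δe ^ nWWwhite m D1 D2 * κ ^ nWWblack m D1 D2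

/-- A basis diagram of the achiral algebra `b'_{2m}`: a well-formed strip with no
eastern exits and no belts. -/
def WBasic (m : ℕ) (D : StripDiagram m) : Prop :=
  StripWf m D ∧ D.belts = 0 ∧ ∀ i, D.dest i ≠ SDest.east

/-- The diagram contains the central cup and cap (the strip strands at the points
adjacent to the wall run into the wall). -/
def CupCap (m : ℕ) (D : StripDiagram m) : Prop :=
  D.dest 0 = SDest.west ∧ D.dest (2 * m - 1) = SDest.west

/-- Removal of the central cup and cap: delete the two points adjacent to the wall and
renumber. -/
def shrink (m : ℕ) (D : StripDiagram m) : StripDiagram (m - 1) :=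
  ⟨fun x => if x < 2 * (m - 1) then
      (match D.dest (x + 1) with
        | SDest.pt j => SDest.pt (j - 1)
        | SDest.west => SDest.west
        | SDest.east => SDest.east)
    else SDest.pt x, 0⟩

/-!
Re-inserting the central cup and cap inverts `shrink`, so `ρ⁻` is a bijection. In the
concatenation of two diagrams that contain the central cup and cap, the four points next to the
wall are cut off from everything else: the two outer ones are boundary points running straight
into the wall, and the two glued middle ones form a closed loop astride the wall. Every other point,
shifted down by one, is a point of the concatenation of the shrunk diagrams, and the shift
preserves strands, glueings and wall ends, hence connectivity. So the composites agree and so do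
the numbers of closed loops. Along the wall, one (for the upper layer) or three (for the lower
layer) of the removed wall ends lie above any remaining one, an odd number, so every remaining
wall loop changes colour; the removed loop is white. Hence the big concatenation has one more
white wall loop, cancelled by `δe⁻¹`, and its black and white wall loops are the white and black
ones of the small concatenation: `δe` and `κ` swap.
-/

open Relation Function

theorem Relation.EqvGen.iff_of_forall_rel {α : Type*} {r : α → α → Prop} (S : α → Prop)
    (hS : ∀ x y, r x y → (S x ↔ S y)) {x y : α} (h : EqvGen r x y) : S x ↔ S y := by
  induction h with
  | rel x y hr => exact hS x y hr
  | refl => exact Iff.rfl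
  | symm _ _ _ ih => exact ih.symm
  | trans _ _ _ _ _ ih₁ ih₂ => exact ih₁.trans ih₂

theorem Relation.EqvGen.map_of_forall_rel {α β : Type*} {r : α → α → Prop}
    {s : β → β → Prop} {P : α → Prop} (φ : α → β)
    (hP : ∀ x y, r x y → (P x ↔ P y))
    (hφ : ∀ x y, r x y → P x → s (φ x) (φ y)) {x y : α} (h : EqvGen r x y) (hx : P x) :
    EqvGen s (φ x) (φ y) := by
  induction h with
  | rel a b hab => exact EqvGen.rel _ _ (hφ a b hab hx)
  | refl => exact EqvGen.refl _
  | symm a b hab ih => exact EqvGen.symm _ _ (ih ((EqvGen.iff_of_forall_rel P hP hab).mpr hx))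
  | trans a b c hab _ ih₁ ih₂ =>
    exact EqvGen.trans _ _ _ (ih₁ hx) (ih₂ ((EqvGen.iff_of_forall_rel P hP hab).mp hx))

theorem Finset.even_card_of_involution {α : Type*} {s : Finset α} (g : α → α)
    (hg_mem : ∀ a ∈ s, g a ∈ s) (hg_ne : ∀ a ∈ s, g a ≠ a)
    (hg_invol : ∀ a ∈ s, g (g a) = a) : Even s.card := by
  rw [← ZMod.natCast_eq_zero_iff_even, Finset.card_eq_sum_ones, Nat.cast_sum, Nat.cast_one]
  exact Finset.sum_involution (fun a _ => g a) (fun _ _ => by decide)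
    (fun a ha _ => hg_ne a ha) (fun a ha => hg_mem a ha) (fun a ha => hg_invol a ha)

section TwoInvolutions

variable {α : Type*} {f g : α → α}

def altIter (f g : α → α) (u : α) : ℕ → α
  | 0 => u
  | k + 1 => if Even k then f (altIter f g u k) else g (altIter f g u k)

theorem altIter_succ_of_even {u : α} {k : ℕ} (hk : Even k) :
    altIter f g u (k + 1) = f (altIter f g u k) := if_pos hk

theorem altIter_succ_of_odd {u : α} {k : ℕ} (hk : ¬Even k) :
    altIter f g u (k + 1) = g (altIter f g u k) := if_neg hk

theorem altIter_neighbours (hf : Involutive f) (hg : Involutive g) {u : α}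
    (hu : IsFixedPt g u) (k : ℕ) :
    ∀ z ∈ ({f (altIter f g u k), g (altIter f g u k)} : Set α),
      z = altIter f g u (k + 1) ∨ z = altIter f g u (k - 1) := by
  rintro z (rfl | rfl)
  · rcases Nat.even_or_odd k with hk | ⟨j, rfl⟩
    · exact Or.inl (altIter_succ_of_even hk).symm
    · rw [altIter_succ_of_even (even_two_mul j), hf, Nat.add_sub_cancel]
      exact Or.inr rfl
  · rcases Nat.even_or_odd' k with ⟨j, rfl | rfl⟩
    · rcases j with _ | j
      · exact Or.inr hu
      · rw [show 2 * (j + 1) = (2 * j + 1) + 1 by ring,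
          altIter_succ_of_odd (by simp), hg, Nat.add_sub_cancel]
        exact Or.inr rfl
    · exact Or.inl (altIter_succ_of_odd (by simp)).symm

theorem mem_of_eqvGen_of_mapsTo (hf : Involutive f) (hg : Involutive g) {T : Set α}
    (hfT : Set.MapsTo f T T) (hgT : Set.MapsTo g T T) {u y : α} (hu : u ∈ T)
    (h : EqvGen (fun a b => b = f a ∨ b = g a) u y) : y ∈ T := by
  refine (EqvGen.iff_of_forall_rel (· ∈ T) ?_ h).mp hu
  rintro a b (rfl | rfl)
  · exact ⟨fun ha => hfT ha, fun hb => hf a ▸ hfT hb⟩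
  · exact ⟨fun ha => hgT ha, fun hb => hg a ▸ hgT hb⟩

theorem mem_range_altIter_of_eqvGen (hf : Involutive f) (hg : Involutive g) {u y : α}
    (hu : IsFixedPt g u) (h : EqvGen (fun a b => b = f a ∨ b = g a) u y) :
    y ∈ Set.range (altIter f g u) := by
  refine mem_of_eqvGen_of_mapsTo hf hg ?_ ?_ ⟨0, rfl⟩ h <;> rintro _ ⟨k, rfl⟩
  · rcases altIter_neighbours hf hg hu k _ (Set.mem_insert _ _) with e | e <;>
      exact ⟨_, e.symm⟩
  · rcases altIter_neighbours hf hg hu k _ (Set.mem_insert_of_mem _ rfl) with e | e <;>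
      exact ⟨_, e.symm⟩

/-- Arriving by an `f`-step at a fixed point of `g`, the alternating walk turns back. -/
theorem mem_altIter_image_Iic_of_eqvGen (hf : Involutive f) (hg : Involutive g) {u y : α}
    (hu : IsFixedPt g u) {K : ℕ} (hK : Even K) (hfix : IsFixedPt g (altIter f g u (K + 1)))
    (h : EqvGen (fun a b => b = f a ∨ b = g a) u y) :
    y ∈ altIter f g u '' Set.Iic (K + 1) := by
  refine mem_of_eqvGen_of_mapsTo hf hg ?_ ?_ ⟨0, Nat.zero_le _, rfl⟩ h <;>
    rintro _ ⟨k, hk, rfl⟩ <;> rcases (Set.mem_Iic.mp hk).lt_or_eq with hk | rfl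
  · rcases altIter_neighbours hf hg hu k _ (Set.mem_insert _ _) with e | e <;>
      exact ⟨_, by simp only [Set.mem_Iic]; omega, e.symm⟩
  · exact ⟨K, by simp, by rw [altIter_succ_of_even hK, hf]⟩
  · rcases altIter_neighbours hf hg hu k _ (Set.mem_insert_of_mem _ rfl) with e | e <;>
      exact ⟨_, by simp only [Set.mem_Iic]; omega, e.symm⟩
  · exact ⟨K + 1, Set.mem_Iic.mpr le_rfl, hfix.symm⟩

/-- In the orbit graph of two involutions, a fixed point `u` of `g` is joined to at most one other
fixed point of `g`: the orbit of `u` is swept out by the alternating walk from `u`, and this walk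
turns back at the first fixed point of `g` it meets. -/
theorem Function.Involutive.eq_of_eqvGen_of_isFixedPt (hf : Involutive f) (hg : Involutive g)
    {u y y' : α} (hu : IsFixedPt g u) (hy : IsFixedPt g y) (hy' : IsFixedPt g y')
    (hyu : y ≠ u) (hy'u : y' ≠ u)
    (h : EqvGen (fun a b => b = f a ∨ b = g a) u y)
    (h' : EqvGen (fun a b => b = f a ∨ b = g a) u y') : y = y' := by
  classical
  obtain ⟨j, rfl⟩ := mem_range_altIter_of_eqvGen hf hg hu h
  have hex : ∃ k, IsFixedPt g (altIter f g u k) ∧ altIter f g u k ≠ u := ⟨j, hy, hyu⟩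
  obtain ⟨hfix, hne⟩ := Nat.find_spec hex
  obtain ⟨K, hK⟩ : ∃ K, Nat.find hex = K + 1 :=
    Nat.exists_eq_succ_of_ne_zero fun h0 => hne (by rw [h0]; rfl)
  rw [hK] at hfix hne
  have hKeven : Even K := by
    by_contra hodd
    have hback : altIter f g u K = altIter f g u (K + 1) := by
      rw [← hfix, altIter_succ_of_odd hodd, hg]
    exact Nat.find_min hex (show K < Nat.find hex by omega) ⟨by rw [hback]; exact hfix,
      by rw [hback]; exact hne⟩
  have hfixed : ∀ {z}, EqvGen (fun a b => b = f a ∨ b = g a) u z → IsFixedPt g z →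
      z ≠ u → z = altIter f g u (K + 1) := by
    rintro z hz hzfix hzu
    obtain ⟨i, hi, rfl⟩ := mem_altIter_image_Iic_of_eqvGen hf hg hu hKeven hfix hz
    have hmin := Nat.find_min' hex ⟨hzfix, hzu⟩
    rw [hK] at hmin
    rw [le_antisymm (Set.mem_Iic.mp hi) hmin]
  exact (hfixed h hy hyu).trans (hfixed h' hy' hy'u).symm

end TwoInvolutions

attribute [ext] StripDiagram

theorem chordsCross_add_one (a b c d : ℕ) :
    chordsCross (a + 1) (b + 1) (c + 1) (d + 1) ↔ chordsCross a b c d := by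
  unfold chordsCross; omega

def SDest.map (f : ℕ → ℕ) : SDest → SDest
  | .pt j => .pt (f j)
  | .west => .west
  | .east => .east

@[simp] theorem SDest.map_pt (f : ℕ → ℕ) (j : ℕ) : (SDest.pt j).map f = .pt (f j) := rfl
@[simp] theorem SDest.map_west (f : ℕ → ℕ) : SDest.west.map f = .west := rfl
@[simp] theorem SDest.map_east (f : ℕ → ℕ) : SDest.east.map f = .east := rfl

@[simp] theorem SDest.map_eq_west {f : ℕ → ℕ} {d : SDest} :
    d.map f = .west ↔ d = .west := by
  cases d <;> simp

@[simp] theorem SDest.map_eq_east {f : ℕ → ℕ} {d : SDest} :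
    d.map f = .east ↔ d = .east := by
  cases d <;> simp

def expand (n : ℕ) (D : StripDiagram n) : StripDiagram (n + 1) :=
  ⟨fun i => if i = 0 ∨ i = 2 * n + 1 then .west
    else if i < 2 * n + 1 then (D.dest (i - 1)).map (· + 1) else .pt i, 0⟩

section ShrinkExpand

variable {n : ℕ}

theorem StripWf.bounds_of_dest_eq_pt {D : StripDiagram (n + 1)} (hD : StripWf (n + 1) D)
    (hC : CupCap (n + 1) D) {i j : ℕ} (hi : i < 2 * (n + 1)) (hij : D.dest i = .pt j) :
    1 ≤ i ∧ i ≤ 2 * n ∧ 1 ≤ j ∧ j ≤ 2 * n := by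
  obtain ⟨hj, -, hji⟩ := hD.2.1 i j hi hij
  have h0 := hC.1
  have h1 : D.dest (2 * n + 1) = .west := hC.2
  have hi0 : i ≠ 0 := by rintro rfl; simp [h0] at hij
  have hi1 : i ≠ 2 * n + 1 := by rintro rfl; simp [h1] at hij
  have hj0 : j ≠ 0 := by rintro rfl; simp [h0] at hji
  have hj1 : j ≠ 2 * n + 1 := by rintro rfl; simp [h1] at hji
  omega

theorem shrink_dest_of_lt (D : StripDiagram (n + 1)) {x : ℕ} (hx : x < 2 * n) :
    (shrink (n + 1) D).dest x = (D.dest (x + 1)).map (· - 1) := by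
  simp only [shrink, Nat.add_sub_cancel, if_pos hx]
  cases D.dest (x + 1) <;> rfl

theorem shrink_dest_of_le (D : StripDiagram (n + 1)) {x : ℕ} (hx : 2 * n ≤ x) :
    (shrink (n + 1) D).dest x = .pt x := by
  simp only [shrink, Nat.add_sub_cancel, if_neg (not_lt.mpr hx)]

theorem shrink_dest_eq_pt {D : StripDiagram (n + 1)} (hD : StripWf (n + 1) D)
    (hC : CupCap (n + 1) D) {x j : ℕ} (hx : x < 2 * n) :
    (shrink (n + 1) D).dest x = .pt j ↔ D.dest (x + 1) = .pt (j + 1) := by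
  rw [shrink_dest_of_lt D hx]
  rcases hd : D.dest (x + 1) with j' | _ | _
  · have := (hD.bounds_of_dest_eq_pt hC (by omega) hd).2.2.1
    simp only [SDest.map_pt, SDest.pt.injEq]
    omega
  all_goals simp

theorem shrink_dest_eq_west (D : StripDiagram (n + 1)) {x : ℕ} (hx : x < 2 * n) :
    (shrink (n + 1) D).dest x = .west ↔ D.dest (x + 1) = .west := by
  rw [shrink_dest_of_lt D hx, SDest.map_eq_west]

theorem shrink_dest_ne_east {D : StripDiagram (n + 1)} (hD : ∀ i, D.dest i ≠ .east) (x : ℕ) :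
    (shrink (n + 1) D).dest x ≠ .east := by
  rcases lt_or_ge x (2 * n) with hx | hx
  · rw [shrink_dest_of_lt D hx, Ne, SDest.map_eq_east]
    exact hD _
  · simp [shrink_dest_of_le D hx]

theorem wBasic_shrink {D : StripDiagram (n + 1)} (hD : WBasic (n + 1) D)
    (hC : CupCap (n + 1) D) : WBasic n (shrink (n + 1) D) := by
  have hpt := fun {x j} (hx : x < 2 * n) => shrink_dest_eq_pt (j := j) hD.1 hC hx
  have hne := shrink_dest_ne_east hD.2.2
  refine ⟨⟨fun i hi => shrink_dest_of_le D hi, ?_, ?_, ?_,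
    fun i _ _ _ _ hie => (hne i hie).elim, fun _ j _ _ _ hje => (hne j hje).elim,
    fun h => absurd h (Nat.not_succ_le_zero 0)⟩, rfl, hne⟩
  · intro i j hi hij
    rw [hpt hi] at hij
    have := hD.1.bounds_of_dest_eq_pt hC (by omega) hij
    obtain ⟨-, hji, hd⟩ := hD.1.2.1 _ _ (by omega) hij
    exact ⟨by omega, by omega, (hpt (by omega)).mpr hd⟩
  · intro i j i' j' hi hi' hij hij'
    rw [← chordsCross_add_one]
    exact hD.1.2.2.1 _ _ _ _ (by omega) (by omega) ((hpt hi).mp hij) ((hpt hi').mp hij')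
  · intro i c j hi hc hiw hcj
    have := hD.1.2.2.2.1 _ _ _ (by omega) (by omega) ((shrink_dest_eq_west D hi).mp hiw)
      ((hpt hc).mp hcj)
    omega

theorem expand_dest_of_mem_Icc (D : StripDiagram n) {i : ℕ} (h1 : 1 ≤ i) (h2 : i ≤ 2 * n) :
    (expand n D).dest i = (D.dest (i - 1)).map (· + 1) := by
  simp only [expand]
  rw [if_neg (by omega), if_pos (by omega)]

theorem expand_dest_of_lt (D : StripDiagram n) {i : ℕ} (hi : 2 * n + 1 < i) :
    (expand n D).dest i = .pt i := by
  simp only [expand]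
  rw [if_neg (by omega), if_neg (by omega)]

theorem expand_cupCap (D : StripDiagram n) : CupCap (n + 1) (expand n D) :=
  ⟨by simp [expand], by rw [show 2 * (n + 1) - 1 = 2 * n + 1 by omega]; simp [expand]⟩

theorem expand_dest_eq_pt (D : StripDiagram n) {i j : ℕ} (hi : i < 2 * (n + 1))
    (hij : (expand n D).dest i = .pt j) :
    1 ≤ i ∧ i ≤ 2 * n ∧ 1 ≤ j ∧ D.dest (i - 1) = .pt (j - 1) := by
  have hC := expand_cupCap D
  have hi' : 1 ≤ i ∧ i ≤ 2 * n := by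
    have h1 : (expand n D).dest (2 * n + 1) = .west := hC.2
    refine ⟨Nat.one_le_iff_ne_zero.mpr ?_, Nat.le_of_lt_succ (lt_of_le_of_ne (by omega) ?_)⟩
    · rintro rfl; simp [hC.1] at hij
    · rintro rfl; simp [h1] at hij
  rw [expand_dest_of_mem_Icc D hi'.1 hi'.2] at hij
  rcases hd : D.dest (i - 1) with j' | _ | _ <;> simp only [hd, SDest.map_pt, SDest.pt.injEq,
    SDest.map_west, SDest.map_east, reduceCtorEq] at hij
  exact ⟨hi'.1, hi'.2, by omega, by rw [← hij, Nat.add_sub_cancel]⟩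

theorem wBasic_expand {D : StripDiagram n} (hD : WBasic n D) : WBasic (n + 1) (expand n D) := by
  have hne : ∀ i, (expand n D).dest i ≠ .east := by
    intro i
    rcases (show i = 0 ∨ i = 2 * n + 1 ∨ (1 ≤ i ∧ i ≤ 2 * n) ∨ 2 * n + 1 < i by omega)
      with rfl | rfl | ⟨h1, h2⟩ | hi
    · simp [(expand_cupCap D).1]
    · simp [show (expand n D).dest (2 * n + 1) = .west from (expand_cupCap D).2]
    · rw [expand_dest_of_mem_Icc D h1 h2, Ne, SDest.map_eq_east]; exact hD.2.2 _
    · simp [expand_dest_of_lt D hi]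
  refine ⟨⟨fun i hi => expand_dest_of_lt D (by omega), ?_, ?_, ?_,
    fun i _ _ _ _ hie => (hne i hie).elim, fun _ j _ _ _ hje => (hne j hje).elim,
    fun h => absurd h (Nat.not_succ_le_zero 0)⟩, rfl, hne⟩
  · intro i j hi hij
    obtain ⟨hi1, hi2, hj1, hd⟩ := expand_dest_eq_pt D hi hij
    obtain ⟨hj, hji, hd'⟩ := hD.1.2.1 _ _ (by omega) hd
    refine ⟨by omega, by omega, ?_⟩
    rw [expand_dest_of_mem_Icc D hj1 (by omega), hd', SDest.map_pt, Nat.sub_add_cancel hi1]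
  · intro i j i' j' hi hi' hij hij'
    obtain ⟨hi1, hi2, hj1, hd⟩ := expand_dest_eq_pt D hi hij
    obtain ⟨hi1', hi2', hj1', hd'⟩ := expand_dest_eq_pt D hi' hij'
    have := hD.1.2.2.1 _ _ _ _ (by omega) (by omega) hd hd'
    rwa [← chordsCross_add_one, Nat.sub_add_cancel hi1, Nat.sub_add_cancel hj1,
      Nat.sub_add_cancel hi1', Nat.sub_add_cancel hj1'] at this
  · intro i c j hi hc hiw hcj
    obtain ⟨hc1, hc2, hj1, hd⟩ := expand_dest_eq_pt D hc hcj
    have hj2 := (hD.1.2.1 _ _ (by omega) hd).1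
    rcases (show i = 0 ∨ i = 2 * n + 1 ∨ (1 ≤ i ∧ i ≤ 2 * n) by omega)
      with rfl | rfl | ⟨h1, h2⟩
    · omega
    · omega
    rw [expand_dest_of_mem_Icc D h1 h2, SDest.map_eq_west] at hiw
    have := hD.1.2.2.2.1 _ _ _ (by omega) (by omega) hiw hd
    omega

theorem shrink_expand {D : StripDiagram n} (hD : WBasic n D) : shrink (n + 1) (expand n D) = D := by
  ext x
  · rcases lt_or_ge x (2 * n) with hx | hx
    · rw [shrink_dest_of_lt _ hx, expand_dest_of_mem_Icc D (by omega) (by omega),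
        Nat.add_sub_cancel]
      cases D.dest x <;> simp
    · rw [shrink_dest_of_le _ hx, hD.1.1 x hx]
  · exact hD.2.1.symm

theorem expand_shrink {D : StripDiagram (n + 1)} (hD : WBasic (n + 1) D)
    (hC : CupCap (n + 1) D) : expand n (shrink (n + 1) D) = D := by
  ext i
  · rcases Nat.lt_or_ge (2 * n + 1) i with hi | hi
    · rw [expand_dest_of_lt _ hi, hD.1.1 i (by omega)]
    rcases (show i = 0 ∨ i = 2 * n + 1 ∨ (1 ≤ i ∧ i ≤ 2 * n) by omega)
      with rfl | rfl | ⟨h1, h2⟩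
    · exact hC.1.symm
    · exact (show (expand n _).dest (2 * n + 1) = .west from (expand_cupCap _).2).trans
        (show D.dest (2 * n + 1) = .west from hC.2).symm
    rw [expand_dest_of_mem_Icc _ h1 h2, shrink_dest_of_lt D (by omega), Nat.sub_add_cancel h1]
    rcases hd : D.dest i with j | _ | _
    · have := (hD.1.bounds_of_dest_eq_pt hC (by omega) hd).2.2.1
      simp only [SDest.map_pt, SDest.pt.injEq]
      omega
    all_goals rfl
  · exact hD.2.1.symm

end ShrinkExpand

section Concatenation

variable {N : ℕ} {E1 E2 : StripDiagram N}

def arcPartner (N : ℕ) (E1 E2 : StripDiagram N) (x : Bool × ℕ) : Bool × ℕ :=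
  match ldest N E1 E2 x with
  | .pt j => (x.1, j)
  | _ => x

/-- The point glued to `x` across the middle edge (`x` itself on the outer boundary). -/
def gluePartner (N : ℕ) (x : Bool × ℕ) : Bool × ℕ :=
  if (x.1 = false ∧ N ≤ x.2 ∨ x.1 = true ∧ x.2 < N) ∧ x.2 < 2 * N then
    (!x.1, 2 * N - 1 - x.2)
  else x

theorem arcPartner_of_ldest_eq_pt {x : Bool × ℕ} {j : ℕ} (h : ldest N E1 E2 x = .pt j) :
    arcPartner N E1 E2 x = (x.1, j) := by
  simp only [arcPartner, h]

theorem arcPartner_involutive (h1 : StripWf N E1) (h2 : StripWf N E2) :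
    Involutive (arcPartner N E1 E2) := by
  have hpair : ∀ x : Bool × ℕ, ∀ j, ldest N E1 E2 x = .pt j →
      ldest N E1 E2 (x.1, j) = .pt x.2 := by
    rintro ⟨b, i⟩ j hij
    rcases lt_or_ge i (2 * N) with hi | hi
    · cases b
      exacts [(h1.2.1 i j hi hij).2.2, (h2.2.1 i j hi hij).2.2]
    · have : ldest N E1 E2 (b, i) = .pt i := by cases b; exacts [h1.1 i hi, h2.1 i hi]
      rw [this, SDest.pt.injEq] at hij
      rw [← hij]; exact this
  intro x
  rcases hd : ldest N E1 E2 x with j | _ | _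
  · rw [arcPartner_of_ldest_eq_pt hd, arcPartner_of_ldest_eq_pt (hpair x j hd)]
  all_goals simp only [arcPartner, hd]

theorem gluePartner_involutive : Involutive (gluePartner N) := by
  rintro ⟨b, i⟩
  by_cases h : (b = false ∧ N ≤ i ∨ b = true ∧ i < N) ∧ i < 2 * N
  · have h' : ((!b) = false ∧ N ≤ 2 * N - 1 - i ∨ (!b) = true ∧ 2 * N - 1 - i < N) ∧
        2 * N - 1 - i < 2 * N := by
      cases b <;> simp at h ⊢ <;> omega
    simp only [gluePartner, if_pos h, if_pos h', Bool.not_not, Prod.mk.injEq, true_and]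
    omega
  · simp only [gluePartner, if_neg h]

theorem SStep.eq_arcPartner_or_eq_gluePartner {x y : Bool × ℕ} (h : SStep N E1 E2 x y) :
    y = arcPartner N E1 E2 x ∨ y = gluePartner N x := by
  cases h with
  | arc1 i j _ hd => exact Or.inl (arcPartner_of_ldest_eq_pt (x := (false, i)) hd).symm
  | arc2 i j _ hd => exact Or.inl (arcPartner_of_ldest_eq_pt (x := (true, i)) hd).symm
  | glue i h1 h2 => exact Or.inr (by simp [gluePartner, h1, h2])

theorem sBd_snd (N i : ℕ) : (sBd N i).2 = i := by
  unfold sBd; split <;> rfl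

theorem isFixedPt_gluePartner_sBd (i : ℕ) : IsFixedPt (gluePartner N) (sBd N i) := by
  unfold sBd
  split <;> simp only [IsFixedPt, gluePartner] <;> rw [if_neg (by simp; omega)]

theorem eq_of_sConn_sBd (h1 : StripWf N E1) (h2 : StripWf N E2) {i j j' : ℕ}
    (hji : j ≠ i) (hj'i : j' ≠ i)
    (c : SConn N E1 E2 (sBd N i) (sBd N j)) (c' : SConn N E1 E2 (sBd N i) (sBd N j')) :
    j = j' := by
  have hmono := EqvGen.mono (r := SStep N E1 E2)
    (p := fun a b => b = arcPartner N E1 E2 a ∨ b = gluePartner N a)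
    fun _ _ => SStep.eq_arcPartner_or_eq_gluePartner
  have hne : ∀ {k}, k ≠ i → sBd N k ≠ sBd N i := fun hk he => hk (by
    simpa [sBd_snd] using congrArg Prod.snd he)
  have := (arcPartner_involutive h1 h2).eq_of_eqvGen_of_isFixedPt gluePartner_involutive
    (isFixedPt_gluePartner_sBd i) (isFixedPt_gluePartner_sBd j) (isFixedPt_gluePartner_sBd j')
    (hne hji) (hne hj'i) (hmono _ _ c) (hmono _ _ c')
  simpa [sBd_snd] using congrArg Prod.snd this

theorem not_isEEnd (h1 : WBasic N E1) (h2 : WBasic N E2) (y : Bool × ℕ) :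
    ¬ isEEnd N E1 E2 y := by
  obtain ⟨b, i⟩ := y
  rintro ⟨-, hy⟩
  cases b
  exacts [h1.2.2 i hy, h2.2.2 i hy]

theorem nWE_eq_zero (h1 : WBasic N E1) (h2 : WBasic N E2) : nWE N E1 E2 = 0 := by
  simp [nWE, not_isEEnd h1 h2]

theorem even_ncard_dest_eq_west {E : StripDiagram N} (hE : WBasic N E) :
    Even {i : ℕ | i < 2 * N ∧ E.dest i = .west}.ncard := by
  classical
  set W := (Finset.range (2 * N)).filter (E.dest · = .west)
  set P := (Finset.range (2 * N)).filter (¬ E.dest · = .west)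
  have hW : {i : ℕ | i < 2 * N ∧ E.dest i = .west} = W := by ext; simp [W]
  have hcard : W.card + P.card = 2 * N := by
    rw [Finset.card_filter_add_card_filter_not, Finset.card_range]
  have hpt : ∀ i ∈ P, ∃ j, E.dest i = .pt j ∧ j < 2 * N ∧ j ≠ i ∧
      E.dest j = .pt i := by
    intro i hi
    simp only [P, Finset.mem_filter, Finset.mem_range] at hi
    rcases hd : E.dest i with j | _ | _
    · exact ⟨j, rfl, hE.1.2.1 i j hi.1 hd⟩
    · exact absurd hd hi.2
    · exact absurd hd (hE.2.2 i)
  let g : ℕ → ℕ := fun i => match E.dest i with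
    | .pt j => j
    | _ => i
  have hg : ∀ i ∈ P, g i ∈ P ∧ g i ≠ i ∧ g (g i) = i := by
    intro i hi
    obtain ⟨j, hij, hj, hji, hj'⟩ := hpt i hi
    simp only [g, hij, hj', P, Finset.mem_filter, Finset.mem_range]
    exact ⟨⟨hj, by simp⟩, hji, trivial⟩
  have hP := Finset.even_card_of_involution g (fun i hi => (hg i hi).1) (fun i hi => (hg i hi).2.1)
    (fun i hi => (hg i hi).2.2)
  rw [hW, Set.ncard_coe_finset]
  obtain ⟨k, hk⟩ := hP
  exact ⟨N - k, by omega⟩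

theorem touchesBd_sBd {i : ℕ} (hi : i < 2 * N) :
    touchesBd N E1 E2 (sBd N i) :=
  ⟨i, hi, EqvGen.refl _⟩

end Concatenation

/-- A point of the concatenation of two diagrams on `n + 1` points that survives `shrink`. -/
def IsInnerPt (n : ℕ) (x : Bool × ℕ) : Prop := 1 ≤ x.2 ∧ x.2 ≤ 2 * n

def succPt (x : Bool × ℕ) : Bool × ℕ := (x.1, x.2 + 1)

def predPt (x : Bool × ℕ) : Bool × ℕ := (x.1, x.2 - 1)

@[simp] theorem predPt_succPt (x : Bool × ℕ) : predPt (succPt x) = x := rfl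

theorem succPt_predPt {n : ℕ} {x : Bool × ℕ} (hx : IsInnerPt n x) : succPt (predPt x) = x :=
  Prod.ext rfl (Nat.sub_add_cancel hx.1)

theorem succPt_injective : Injective succPt :=
  fun x y h => by simpa using congrArg predPt h

theorem isInnerPt_succPt {n : ℕ} {x : Bool × ℕ} : IsInnerPt n (succPt x) ↔ x.2 < 2 * n := by
  simp only [IsInnerPt, succPt]; omega

theorem sBd_succ (n j : ℕ) : sBd (n + 1) (j + 1) = succPt (sBd n j) := by
  unfold sBd succPt; split_ifs <;> first | rfl | omega

theorem lexLt_succPt {x y : Bool × ℕ} : lexLt (succPt x) (succPt y) ↔ lexLt x y := by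
  simp [lexLt, succPt]

section ShrinkConcatenation

variable {n : ℕ} {D1 D2 : StripDiagram (n + 1)}

theorem SStep.isInnerPt_iff (h₁ : StripWf (n + 1) D1 ∧ CupCap (n + 1) D1)
    (h₂ : StripWf (n + 1) D2 ∧ CupCap (n + 1) D2) {x y : Bool × ℕ}
    (hs : SStep (n + 1) D1 D2 x y) : IsInnerPt n x ↔ IsInnerPt n y := by
  cases hs with
  | arc1 i j hi hd => have := h₁.1.bounds_of_dest_eq_pt h₁.2 hi hd; simp only [IsInnerPt]; omega
  | arc2 i j hi hd => have := h₂.1.bounds_of_dest_eq_pt h₂.2 hi hd; simp only [IsInnerPt]; omega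
  | glue i _ _ => simp only [IsInnerPt]; omega

theorem SStep.map_predPt (h₁ : StripWf (n + 1) D1 ∧ CupCap (n + 1) D1)
    (h₂ : StripWf (n + 1) D2 ∧ CupCap (n + 1) D2) {x y : Bool × ℕ}
    (hs : SStep (n + 1) D1 D2 x y) (hx : IsInnerPt n x) :
    SStep n (shrink (n + 1) D1) (shrink (n + 1) D2) (predPt x) (predPt y) := by
  cases hs with
  | arc1 i j hi hd =>
    have := h₁.1.bounds_of_dest_eq_pt h₁.2 hi hd
    refine SStep.arc1 (i - 1) (j - 1) (by omega)
      ((shrink_dest_eq_pt h₁.1 h₁.2 (by omega)).mpr ?_)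
    rwa [Nat.sub_add_cancel this.1, Nat.sub_add_cancel this.2.2.1]
  | arc2 i j hi hd =>
    have := h₂.1.bounds_of_dest_eq_pt h₂.2 hi hd
    refine SStep.arc2 (i - 1) (j - 1) (by omega)
      ((shrink_dest_eq_pt h₂.1 h₂.2 (by omega)).mpr ?_)
    rwa [Nat.sub_add_cancel this.1, Nat.sub_add_cancel this.2.2.1]
  | glue i hi₁ hi₂ =>
    have := hx.2
    simp only [predPt]
    rw [show 2 * (n + 1) - 1 - i - 1 = 2 * n - 1 - (i - 1) by omega]
    exact SStep.glue (i - 1) (by omega) (by omega)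

theorem SStep.map_succPt (h₁ : StripWf (n + 1) D1 ∧ CupCap (n + 1) D1)
    (h₂ : StripWf (n + 1) D2 ∧ CupCap (n + 1) D2) {x y : Bool × ℕ}
    (hs : SStep n (shrink (n + 1) D1) (shrink (n + 1) D2) x y) :
    SStep (n + 1) D1 D2 (succPt x) (succPt y) := by
  cases hs with
  | arc1 i j hi hd => exact SStep.arc1 _ _ (by omega) ((shrink_dest_eq_pt h₁.1 h₁.2 hi).mp hd)
  | arc2 i j hi hd => exact SStep.arc2 _ _ (by omega) ((shrink_dest_eq_pt h₂.1 h₂.2 hi).mp hd)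
  | glue i hi₁ hi₂ =>
    simp only [succPt]
    rw [show 2 * n - 1 - i + 1 = 2 * (n + 1) - 1 - (i + 1) by omega]
    exact SStep.glue (i + 1) (by omega) (by omega)

theorem SConn.isInnerPt_iff (h₁ : StripWf (n + 1) D1 ∧ CupCap (n + 1) D1)
    (h₂ : StripWf (n + 1) D2 ∧ CupCap (n + 1) D2) {x y : Bool × ℕ}
    (h : SConn (n + 1) D1 D2 x y) : IsInnerPt n x ↔ IsInnerPt n y :=
  EqvGen.iff_of_forall_rel (IsInnerPt n) (fun _ _ hs => hs.isInnerPt_iff h₁ h₂) h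

theorem SConn.map_predPt (h₁ : StripWf (n + 1) D1 ∧ CupCap (n + 1) D1)
    (h₂ : StripWf (n + 1) D2 ∧ CupCap (n + 1) D2) {x y : Bool × ℕ}
    (h : SConn (n + 1) D1 D2 x y) (hx : IsInnerPt n x) :
    SConn n (shrink (n + 1) D1) (shrink (n + 1) D2) (predPt x) (predPt y) :=
  EqvGen.map_of_forall_rel predPt (fun _ _ hs => hs.isInnerPt_iff h₁ h₂)
    (fun _ _ hs hx => hs.map_predPt h₁ h₂ hx) h hx

theorem SConn.map_succPt (h₁ : StripWf (n + 1) D1 ∧ CupCap (n + 1) D1)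
    (h₂ : StripWf (n + 1) D2 ∧ CupCap (n + 1) D2) {x y : Bool × ℕ}
    (h : SConn n (shrink (n + 1) D1) (shrink (n + 1) D2) x y) :
    SConn (n + 1) D1 D2 (succPt x) (succPt y) :=
  EqvGen.map_of_forall_rel (P := fun _ => True) succPt (fun _ _ _ => Iff.rfl)
    (fun _ _ hs _ => hs.map_succPt h₁ h₂) h trivial

theorem isWEnd_iff_predPt {x : Bool × ℕ} (hx : IsInnerPt n x) :
    isWEnd (n + 1) D1 D2 x ↔ isWEnd n (shrink (n + 1) D1) (shrink (n + 1) D2) (predPt x) := by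
  obtain ⟨b, i⟩ := x
  obtain ⟨hi₁, hi₂⟩ : 1 ≤ i ∧ i ≤ 2 * n := hx
  have e : i - 1 + 1 = i := Nat.sub_add_cancel hi₁
  cases b <;>
    simp only [isWEnd, ldest, predPt, Bool.false_eq_true, if_true, if_false,
      shrink_dest_eq_west _ (show i - 1 < 2 * n by omega), e] <;>
    exact and_congr_left fun _ => by omega

theorem exists_isWEnd_sConn_iff (h₁ : StripWf (n + 1) D1 ∧ CupCap (n + 1) D1)
    (h₂ : StripWf (n + 1) D2 ∧ CupCap (n + 1) D2) {x : Bool × ℕ} (hx : IsInnerPt n x) :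
    (∃ y, isWEnd (n + 1) D1 D2 y ∧ SConn (n + 1) D1 D2 x y) ↔
      ∃ y, isWEnd n (shrink (n + 1) D1) (shrink (n + 1) D2) y ∧
        SConn n (shrink (n + 1) D1) (shrink (n + 1) D2) (predPt x) y := by
  constructor
  · rintro ⟨y, hy, hxy⟩
    exact ⟨predPt y, (isWEnd_iff_predPt ((hxy.isInnerPt_iff h₁ h₂).mp hx)).mp hy,
      hxy.map_predPt h₁ h₂ hx⟩
  · rintro ⟨y, hy, hxy⟩
    have hy' : IsInnerPt n (succPt y) := isInnerPt_succPt.mpr hy.1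
    refine ⟨succPt y, (isWEnd_iff_predPt hy').mpr hy, ?_⟩
    simpa [succPt_predPt hx] using hxy.map_succPt h₁ h₂

theorem sConn_sBd_succ_iff (h₁ : StripWf (n + 1) D1 ∧ CupCap (n + 1) D1)
    (h₂ : StripWf (n + 1) D2 ∧ CupCap (n + 1) D2) {x : Bool × ℕ} (hx : IsInnerPt n x)
    {j : ℕ} :
    SConn (n + 1) D1 D2 x (sBd (n + 1) j) ↔
      ∃ j', j = j' + 1 ∧ j' < 2 * n ∧
        SConn n (shrink (n + 1) D1) (shrink (n + 1) D2) (predPt x) (sBd n j') := by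
  constructor
  · intro h
    obtain ⟨hj₁, hj₂⟩ := (h.isInnerPt_iff h₁ h₂).mp hx
    rw [sBd_snd] at hj₁ hj₂
    obtain ⟨j', rfl⟩ := Nat.exists_eq_add_of_le' hj₁
    refine ⟨j', rfl, by omega, ?_⟩
    simpa [sBd_succ] using h.map_predPt h₁ h₂ hx
  · rintro ⟨j', rfl, -, h⟩
    simpa [sBd_succ, succPt_predPt hx] using h.map_succPt h₁ h₂

theorem touchesBd_iff_predPt (h₁ : StripWf (n + 1) D1 ∧ CupCap (n + 1) D1)
    (h₂ : StripWf (n + 1) D2 ∧ CupCap (n + 1) D2) {x : Bool × ℕ} (hx : IsInnerPt n x) :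
    touchesBd (n + 1) D1 D2 x ↔
      touchesBd n (shrink (n + 1) D1) (shrink (n + 1) D2) (predPt x) := by
  simp only [touchesBd, sConn_sBd_succ_iff h₁ h₂ hx]
  constructor
  · rintro ⟨_, -, j, rfl, hj, h⟩
    exact ⟨j, hj, h⟩
  · rintro ⟨j, hj, h⟩
    exact ⟨j + 1, by omega, j, rfl, hj, h⟩

theorem compDest_succ (h₁ : WBasic (n + 1) D1 ∧ CupCap (n + 1) D1)
    (h₂ : WBasic (n + 1) D2 ∧ CupCap (n + 1) D2) {x : ℕ} (hx : x < 2 * n) :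
    (compDest (n + 1) D1 D2 (x + 1)).map (· - 1) =
      compDest n (shrink (n + 1) D1) (shrink (n + 1) D2) x := by
  have h₁' : StripWf (n + 1) D1 ∧ CupCap (n + 1) D1 := ⟨h₁.1.1, h₁.2⟩
  have h₂' : StripWf (n + 1) D2 ∧ CupCap (n + 1) D2 := ⟨h₂.1.1, h₂.2⟩
  have hb : IsInnerPt n (sBd (n + 1) (x + 1)) := by
    rw [sBd_succ, isInnerPt_succPt, sBd_snd]; exact hx
  have hpb : predPt (sBd (n + 1) (x + 1)) = sBd n x := by rw [sBd_succ, predPt_succPt]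
  have hconn := fun j => hpb ▸ sConn_sBd_succ_iff h₁' h₂' hb (j := j)
  have hpartner : (∃ j, j < 2 * (n + 1) ∧ j ≠ x + 1 ∧
        SConn (n + 1) D1 D2 (sBd (n + 1) (x + 1)) (sBd (n + 1) j)) ↔
      ∃ j, j < 2 * n ∧ j ≠ x ∧
        SConn n (shrink (n + 1) D1) (shrink (n + 1) D2) (sBd n x) (sBd n j) := by
    constructor
    · rintro ⟨j, -, hjx, h⟩
      obtain ⟨k, rfl, hk, h'⟩ := (hconn _).mp h
      exact ⟨k, hk, by omega, h'⟩
    · rintro ⟨j, hj, hjx, h⟩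
      exact ⟨j + 1, by omega, by omega, (hconn _).mpr ⟨j, rfl, hj, h⟩⟩
  have hwall := hpb ▸ exists_isWEnd_sConn_iff h₁' h₂' hb
  unfold compDest
  rw [if_pos hx, if_pos (by omega)]
  by_cases hp : ∃ j, j < 2 * n ∧ j ≠ x ∧
      SConn n (shrink (n + 1) D1) (shrink (n + 1) D2) (sBd n x) (sBd n j)
  · rw [dif_pos hp, dif_pos (hpartner.mpr hp), SDest.map_pt, SDest.pt.injEq]
    obtain ⟨-, hne', h⟩ := Classical.choose_spec (hpartner.mpr hp)
    obtain ⟨k, hk, -, h'⟩ := (hconn _).mp h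
    obtain ⟨-, hne, h''⟩ := Classical.choose_spec hp
    rw [hk, Nat.add_sub_cancel]
    exact eq_of_sConn_sBd (wBasic_shrink h₁.1 h₁.2).1 (wBasic_shrink h₂.1 h₂.2).1 (by omega)
      hne h' h''
  · rw [dif_neg hp, dif_neg (mt hpartner.mp hp)]
    by_cases hw : ∃ y, isWEnd n (shrink (n + 1) D1) (shrink (n + 1) D2) y ∧
        SConn n (shrink (n + 1) D1) (shrink (n + 1) D2) (sBd n x) y
    · rw [if_pos hw, if_pos (hwall.mpr hw), SDest.map_west]
    · rw [if_neg hw, if_neg (mt hwall.mp hw), SDest.map_east]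

theorem compStrip_shrink (h₁ : WBasic (n + 1) D1 ∧ CupCap (n + 1) D1)
    (h₂ : WBasic (n + 1) D2 ∧ CupCap (n + 1) D2) :
    shrink (n + 1) (compStrip (n + 1) D1 D2) =
      compStrip n (shrink (n + 1) D1) (shrink (n + 1) D2) := by
  ext x
  · rcases lt_or_ge x (2 * n) with hx | hx
    · rw [shrink_dest_of_lt _ hx]
      exact compDest_succ h₁ h₂ hx
    · rw [shrink_dest_of_le _ hx]
      simp only [compStrip, compDest, if_neg (not_lt.mpr hx)]
  · show 0 = ((shrink (n + 1) D1).belts + (shrink (n + 1) D2).belts + nWE n _ _) % 2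
    rw [nWE_eq_zero (wBasic_shrink h₁.1 h₁.2) (wBasic_shrink h₂.1 h₂.2)]
    rfl

end ShrinkConcatenation

theorem Set.finite_of_forall_snd_lt {s : Set (Bool × ℕ)} (k : ℕ) (h : ∀ x ∈ s, x.2 < k) :
    s.Finite :=
  (Set.finite_univ.prod (Set.finite_Iio k)).subset fun x hx => ⟨trivial, h x hx⟩

/-- The four points of a concatenation on `n + 1` points that do not survive `shrink`: the
corners next to the wall, and the two glued middle points next to the wall. -/
def cornerPts (n : ℕ) : Set (Bool × ℕ) :=
  {(false, 0), (false, 2 * n + 1), (true, 0), (true, 2 * n + 1)}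

theorem mem_cornerPts_or_isInnerPt {n : ℕ} {x : Bool × ℕ} (hx : x.2 < 2 * (n + 1)) :
    x ∈ cornerPts n ∨ IsInnerPt n x := by
  obtain ⟨b, i⟩ := x
  simp only [cornerPts, IsInnerPt, Set.mem_insert_iff, Set.mem_singleton_iff,
    Prod.mk.injEq] at hx ⊢
  cases b <;> simp
  all_goals omega

theorem not_isInnerPt_of_mem_cornerPts {n : ℕ} {x : Bool × ℕ} (hx : x ∈ cornerPts n) :
    ¬ IsInnerPt n x := by
  simp only [cornerPts, Set.mem_insert_iff, Set.mem_singleton_iff] at hx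
  rcases hx with rfl | rfl | rfl | rfl <;> simp [IsInnerPt]

theorem cornerPts_lexLt_succPt_false {n q : ℕ} (hq : q ≤ 2 * n) :
    {c | c ∈ cornerPts n ∧ lexLt c (succPt (false, q))} = {(false, 0)} := by
  ext ⟨b, i⟩
  cases b <;> simp [cornerPts, lexLt, succPt]
  omega

theorem cornerPts_lexLt_succPt_true {n q : ℕ} (hq : q < 2 * n) :
    {c | c ∈ cornerPts n ∧ lexLt c (succPt (true, q))} =
      {(false, 0), (false, 2 * n + 1), (true, 0)} := by
  ext ⟨b, i⟩
  cases b <;> simp [cornerPts, lexLt, succPt]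
  omega

theorem odd_ncard_cornerPts_lexLt_succPt {n : ℕ} {x : Bool × ℕ} (hx : x.2 < 2 * n) :
    Odd {c | c ∈ cornerPts n ∧ lexLt c (succPt x)}.ncard := by
  obtain ⟨b, q⟩ := x
  cases b
  · rw [cornerPts_lexLt_succPt_false hx.le, Set.ncard_singleton]; decide
  · rw [cornerPts_lexLt_succPt_true hx,
      Set.ncard_eq_three.mpr ⟨_, _, _, by simp, by simp, by simp, rfl⟩]
    decide

section Counts

variable {n : ℕ} {D1 D2 : StripDiagram (n + 1)}

theorem isWEnd_iff (hC₁ : CupCap (n + 1) D1) (hC₂ : CupCap (n + 1) D2) {w : Bool × ℕ} :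
    isWEnd (n + 1) D1 D2 w ↔
      w ∈ cornerPts n ∨
        w ∈ succPt '' {y | isWEnd n (shrink (n + 1) D1) (shrink (n + 1) D2) y} := by
  constructor
  · intro hw
    refine (mem_cornerPts_or_isInnerPt hw.1).imp_right fun hI => ?_
    exact ⟨predPt w, (isWEnd_iff_predPt hI).mp hw, succPt_predPt hI⟩
  · rintro (hw | ⟨y, hy, rfl⟩)
    · have h₁ : D1.dest (2 * n + 1) = .west := hC₁.2
      have h₂ : D2.dest (2 * n + 1) = .west := hC₂.2
      simp only [cornerPts, Set.mem_insert_iff, Set.mem_singleton_iff] at hw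
      rcases hw with rfl | rfl | rfl | rfl <;>
        exact ⟨by dsimp only; omega, by simp [ldest, hC₁.1, hC₂.1, h₁, h₂]⟩
    · exact (isWEnd_iff_predPt (isInnerPt_succPt.mpr hy.1)).mpr hy

theorem wRank_succPt (hC₁ : CupCap (n + 1) D1) (hC₂ : CupCap (n + 1) D2) (x : Bool × ℕ) :
    wRank (n + 1) D1 D2 (succPt x) = {c | c ∈ cornerPts n ∧ lexLt c (succPt x)}.ncard +
      wRank n (shrink (n + 1) D1) (shrink (n + 1) D2) x := by
  have hset : {y | isWEnd (n + 1) D1 D2 y ∧ lexLt y (succPt x)} =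
      {c | c ∈ cornerPts n ∧ lexLt c (succPt x)} ∪
        succPt '' {y | isWEnd n (shrink (n + 1) D1) (shrink (n + 1) D2) y ∧ lexLt y x} := by
    ext y
    simp only [Set.mem_ofPred_eq, Set.mem_union, Set.mem_image, isWEnd_iff hC₁ hC₂]
    constructor
    · rintro ⟨hy | ⟨y', hy', rfl⟩, hlt⟩
      · exact Or.inl ⟨hy, hlt⟩
      · exact Or.inr ⟨y', ⟨hy', lexLt_succPt.mp hlt⟩, rfl⟩
    · rintro (⟨hy, hlt⟩ | ⟨y', ⟨hy', hlt⟩, rfl⟩)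
      · exact ⟨Or.inl hy, hlt⟩
      · exact ⟨Or.inr ⟨y', hy', rfl⟩, lexLt_succPt.mpr hlt⟩
  have hfin := Set.finite_of_forall_snd_lt (2 * n)
    (s := {y | isWEnd n (shrink (n + 1) D1) (shrink (n + 1) D2) y ∧ lexLt y x}) fun y hy => hy.1.1
  have hdisj : Disjoint {c | c ∈ cornerPts n ∧ lexLt c (succPt x)}
      (succPt '' {y | isWEnd n (shrink (n + 1) D1) (shrink (n + 1) D2) y ∧ lexLt y x}) := by
    rw [Set.disjoint_left]
    rintro _ ⟨hc, -⟩ ⟨y, hy, rfl⟩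
    exact not_isInnerPt_of_mem_cornerPts hc (isInnerPt_succPt.mpr hy.1.1)
  have hcorners : {c | c ∈ cornerPts n ∧ lexLt c (succPt x)}.Finite :=
    (show (cornerPts n).Finite by simp [cornerPts]).subset fun c hc => hc.1
  rw [wRank, hset, Set.ncard_union_eq hdisj hcorners
    (hfin.image _), Set.ncard_image_of_injective _ succPt_injective, wRank]

theorem wRank_succPt_add_one_mod_two (hC₁ : CupCap (n + 1) D1) (hC₂ : CupCap (n + 1) D2)
    {x : Bool × ℕ} (hx : x.2 < 2 * n) :
    (wRank (n + 1) D1 D2 (succPt x) + 1) % 2 =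
      wRank n (shrink (n + 1) D1) (shrink (n + 1) D2) x % 2 := by
  obtain ⟨k, hk⟩ := odd_ncard_cornerPts_lexLt_succPt hx
  rw [wRank_succPt hC₁ hC₂, hk]
  omega

theorem odd_wRank_centre (h₁ : WBasic (n + 1) D1 ∧ CupCap (n + 1) D1)
    (hC₂ : CupCap (n + 1) D2) :
    Odd (wRank (n + 1) D1 D2 (false, 2 * n + 1)) := by
  have hset : {y | isWEnd n (shrink (n + 1) D1) (shrink (n + 1) D2) y ∧ lexLt y (false, 2 * n)} =
      (fun i => (false, i)) '' {i | i < 2 * n ∧ (shrink (n + 1) D1).dest i = .west} := by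
    ext ⟨b, i⟩
    cases b <;> simp [isWEnd, lexLt, ldest]
    exact fun h _ => h
  have heven := even_ncard_dest_eq_west (wBasic_shrink h₁.1 h₁.2)
  rw [show ((false, 2 * n + 1) : Bool × ℕ) = succPt (false, 2 * n) from rfl,
    wRank_succPt h₁.2 hC₂, cornerPts_lexLt_succPt_false le_rfl, Set.ncard_singleton, wRank,
    hset,     Set.ncard_image_of_injective _ fun _ _ h => (Prod.mk.inj h).2]
  exact heven.one_add

end Counts

section WallLoops

variable {n : ℕ} {D1 D2 : StripDiagram (n + 1)}

/-- The glued central cap of `D1` and central cup of `D2` form a closed loop astride the wall. -/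
theorem sConn_centre (h₁ : StripWf (n + 1) D1 ∧ CupCap (n + 1) D1)
    (h₂ : StripWf (n + 1) D2 ∧ CupCap (n + 1) D2) {y : Bool × ℕ}
    (h : SConn (n + 1) D1 D2 (false, 2 * n + 1) y) : y = (false, 2 * n + 1) ∨ y = (true, 0) := by
  refine (EqvGen.iff_of_forall_rel (fun z => z = (false, 2 * n + 1) ∨ z = (true, 0)) ?_ h).mp
    (Or.inl rfl)
  intro x y hs
  cases hs with
  | arc1 i j hi hd =>
    have := h₁.1.bounds_of_dest_eq_pt h₁.2 hi hd
    simp only [Prod.mk.injEq, Bool.false_eq_true, false_and, true_and, or_false]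
    omega
  | arc2 i j hi hd =>
    have := h₂.1.bounds_of_dest_eq_pt h₂.2 hi hd
    simp only [Prod.mk.injEq, Bool.true_eq_false, false_and, true_and, false_or]
    omega
  | glue i _ _ =>
    simp only [Prod.mk.injEq, Bool.true_eq_false, false_and, true_and, false_or]
    omega

theorem sBd_ne_centre (n i : ℕ) :
    sBd (n + 1) i ≠ (false, 2 * n + 1) ∧ sBd (n + 1) i ≠ (true, 0) := by
  unfold sBd; split <;> simp <;> omega

theorem isWWTop_centre (h₁ : WBasic (n + 1) D1 ∧ CupCap (n + 1) D1)
    (h₂ : WBasic (n + 1) D2 ∧ CupCap (n + 1) D2) :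
    isWWTop (n + 1) D1 D2 (false, 2 * n + 1) := by
  have hcomp := fun {y} => sConn_centre ⟨h₁.1.1, h₁.2⟩ ⟨h₂.1.1, h₂.2⟩ (y := y)
  refine ⟨(isWEnd_iff h₁.2 h₂.2).mpr (Or.inl (by simp [cornerPts])), ?_,
    fun ⟨y, hy, _⟩ => not_isEEnd h₁.1 h₂.1 y hy, ?_⟩
  · rintro ⟨i, -, hi⟩
    rcases hcomp hi with h | h
    exacts [(sBd_ne_centre n i).1 h, (sBd_ne_centre n i).2 h]
  · intro y _ hy
    rcases hcomp hy with rfl | rfl <;> simp [lexLt]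

theorem isWWTop_succPt_iff (h₁ : WBasic (n + 1) D1 ∧ CupCap (n + 1) D1)
    (h₂ : WBasic (n + 1) D2 ∧ CupCap (n + 1) D2) {x : Bool × ℕ} (hx : x.2 < 2 * n) :
    isWWTop (n + 1) D1 D2 (succPt x) ↔ isWWTop n (shrink (n + 1) D1) (shrink (n + 1) D2) x := by
  have h₁' : StripWf (n + 1) D1 ∧ CupCap (n + 1) D1 := ⟨h₁.1.1, h₁.2⟩
  have h₂' : StripWf (n + 1) D2 ∧ CupCap (n + 1) D2 := ⟨h₂.1.1, h₂.2⟩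
  have hI : IsInnerPt n (succPt x) := isInnerPt_succPt.mpr hx
  have hE := not_isEEnd h₁.1 h₂.1
  have hE' := not_isEEnd (wBasic_shrink h₁.1 h₁.2) (wBasic_shrink h₂.1 h₂.2)
  simp only [isWWTop, isWEnd_iff_predPt hI, touchesBd_iff_predPt h₁' h₂' hI, predPt_succPt, hE,
    hE', false_and, exists_false, not_false_eq_true, true_and, and_congr_right_iff]
  intro _ _
  constructor
  · intro hmin y hy hxy
    rw [← lexLt_succPt]
    exact hmin _ ((isWEnd_iff_predPt (isInnerPt_succPt.mpr hy.1)).mpr hy)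
      (hxy.map_succPt h₁' h₂')
  · intro hmin y hy hxy
    have hyI := (hxy.isInnerPt_iff h₁' h₂').mp hI
    rw [← succPt_predPt hyI, lexLt_succPt]
    exact hmin _ ((isWEnd_iff_predPt hyI).mp hy) (hxy.map_predPt h₁' h₂' hI)

theorem isWWTop_iff (h₁ : WBasic (n + 1) D1 ∧ CupCap (n + 1) D1)
    (h₂ : WBasic (n + 1) D2 ∧ CupCap (n + 1) D2) {x : Bool × ℕ} :
    isWWTop (n + 1) D1 D2 x ↔
      x = (false, 2 * n + 1) ∨
        x ∈ succPt '' {x' | isWWTop n (shrink (n + 1) D1) (shrink (n + 1) D2) x'} := by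
  constructor
  · intro hx
    rcases mem_cornerPts_or_isInnerPt hx.1.1 with hc | hI
    · simp only [cornerPts, Set.mem_insert_iff, Set.mem_singleton_iff] at hc
      rcases hc with rfl | rfl | rfl | rfl
      · exact (hx.2.1 (touchesBd_sBd (i := 0) (by omega))).elim
      · exact Or.inl rfl
      · -- `(true, 0)` is the lower end of the central loop, whose upper end is a wall end
        refine (hx.2.2.2 _ (isWWTop_centre h₁ h₂).1 ?_ (Or.inl ⟨rfl, rfl⟩)).elim
        refine EqvGen.symm _ _ (EqvGen.rel _ _ ?_)
        have := SStep.glue (m := n + 1) (D1 := D1) (D2 := D2) (2 * n + 1) (by omega) (by omega)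
        rwa [show 2 * (n + 1) - 1 - (2 * n + 1) = 0 by omega] at this
      · refine (hx.2.1 ?_).elim
        have := touchesBd_sBd (E1 := D1) (E2 := D2) (i := 2 * n + 1) (by omega)
        rwa [sBd, if_neg (by omega)] at this
    · refine Or.inr ⟨predPt x, (isWWTop_succPt_iff h₁ h₂ ?_).mp ?_, succPt_predPt hI⟩
      · show x.2 - 1 < 2 * n
        have := hI.1
        have := hI.2
        omega
      · rwa [succPt_predPt hI]
  · rintro (rfl | ⟨x', hx', rfl⟩)
    · exact isWWTop_centre h₁ h₂
    · exact (isWWTop_succPt_iff h₁ h₂ hx'.1.1).mpr hx'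

end WallLoops

section Coefficients

variable {n : ℕ} {D1 D2 : StripDiagram (n + 1)}

theorem nWWwhite_shrink (h₁ : WBasic (n + 1) D1 ∧ CupCap (n + 1) D1)
    (h₂ : WBasic (n + 1) D2 ∧ CupCap (n + 1) D2) :
    nWWwhite (n + 1) D1 D2 = nWWblack n (shrink (n + 1) D1) (shrink (n + 1) D2) + 1 := by
  have hset : {x | isWWTop (n + 1) D1 D2 x ∧ (wRank (n + 1) D1 D2 x + 1) % 2 = 0} =
      insert (false, 2 * n + 1)
        (succPt '' {x | isWWTop n (shrink (n + 1) D1) (shrink (n + 1) D2) x ∧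
          (wRank n (shrink (n + 1) D1) (shrink (n + 1) D2) x + 1) % 2 = 1}) := by
    ext x
    simp only [Set.mem_ofPred_eq, Set.mem_insert_iff, Set.mem_image, isWWTop_iff h₁ h₂]
    have hcentre := odd_wRank_centre h₁ h₂.2
    constructor
    · rintro ⟨rfl | ⟨x', hx', rfl⟩, hpar⟩
      · exact Or.inl rfl
      · have := wRank_succPt_add_one_mod_two h₁.2 h₂.2 hx'.1.1
        exact Or.inr ⟨x', ⟨hx', by omega⟩, rfl⟩
    · rintro (rfl | ⟨x', ⟨hx', hpar⟩, rfl⟩)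
      · obtain ⟨k, hk⟩ := hcentre
        exact ⟨Or.inl rfl, by omega⟩
      · have := wRank_succPt_add_one_mod_two h₁.2 h₂.2 hx'.1.1
        exact ⟨Or.inr ⟨x', hx', rfl⟩, by omega⟩
  have hfin := Set.finite_of_forall_snd_lt (2 * n)
    (s := {x | isWWTop n (shrink (n + 1) D1) (shrink (n + 1) D2) x ∧
      (wRank n (shrink (n + 1) D1) (shrink (n + 1) D2) x + 1) % 2 = 1}) fun x hx => hx.1.1.1
  rw [nWWwhite, hset, Set.ncard_insert_of_notMem _ (hfin.image _),
    Set.ncard_image_of_injective _ succPt_injective, nWWblack]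
  rintro ⟨x', hx', he⟩
  exact not_isInnerPt_of_mem_cornerPts (by simp [cornerPts])
    (he ▸ isInnerPt_succPt.mpr hx'.1.1.1)

theorem nWWblack_shrink (h₁ : WBasic (n + 1) D1 ∧ CupCap (n + 1) D1)
    (h₂ : WBasic (n + 1) D2 ∧ CupCap (n + 1) D2) :
    nWWblack (n + 1) D1 D2 = nWWwhite n (shrink (n + 1) D1) (shrink (n + 1) D2) := by
  have hset : {x | isWWTop (n + 1) D1 D2 x ∧ (wRank (n + 1) D1 D2 x + 1) % 2 = 1} =
      succPt '' {x | isWWTop n (shrink (n + 1) D1) (shrink (n + 1) D2) x ∧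
        (wRank n (shrink (n + 1) D1) (shrink (n + 1) D2) x + 1) % 2 = 0} := by
    ext x
    simp only [Set.mem_ofPred_eq, Set.mem_image, isWWTop_iff h₁ h₂]
    have hcentre := odd_wRank_centre h₁ h₂.2
    constructor
    · rintro ⟨rfl | ⟨x', hx', rfl⟩, hpar⟩
      · obtain ⟨k, hk⟩ := hcentre
        omega
      · have := wRank_succPt_add_one_mod_two h₁.2 h₂.2 hx'.1.1
        exact ⟨x', ⟨hx', by omega⟩, rfl⟩
    · rintro ⟨x', ⟨hx', hpar⟩, rfl⟩
      have := wRank_succPt_add_one_mod_two h₁.2 h₂.2 hx'.1.1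
      exact ⟨Or.inr ⟨x', hx', rfl⟩, by omega⟩
  rw [nWWblack, hset, Set.ncard_image_of_injective _ succPt_injective, nWWwhite]

theorem nLoops_shrink (h₁ : WBasic (n + 1) D1 ∧ CupCap (n + 1) D1)
    (h₂ : WBasic (n + 1) D2 ∧ CupCap (n + 1) D2) :
    nLoops (n + 1) D1 D2 = nLoops n (shrink (n + 1) D1) (shrink (n + 1) D2) := by
  have h₁' : StripWf (n + 1) D1 ∧ CupCap (n + 1) D1 := ⟨h₁.1.1, h₁.2⟩
  have h₂' : StripWf (n + 1) D2 ∧ CupCap (n + 1) D2 := ⟨h₂.1.1, h₂.2⟩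
  have hE := not_isEEnd h₁.1 h₂.1
  have hE' := not_isEEnd (wBasic_shrink h₁.1 h₁.2) (wBasic_shrink h₂.1 h₂.2)
  simp only [nLoops, hE, hE', or_false]
  refine Eq.trans ?_ (Set.ncard_image_of_injective _ (add_left_injective 1))
  congr 1
  ext i
  simp only [Set.mem_ofPred_eq, Set.mem_image]
  constructor
  · rintro ⟨hi₁, hi₂, htouch, hwall, hmin⟩
    have hi : i ≠ 2 * n + 1 := by
      rintro rfl
      exact hwall ⟨_, (isWWTop_centre h₁ h₂).1, EqvGen.refl _⟩
    have hI : IsInnerPt n (false, i) := ⟨by dsimp only; omega, by dsimp only; omega⟩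
    refine ⟨i - 1, ⟨by omega, by omega, mt (touchesBd_iff_predPt h₁' h₂' hI).mpr htouch,
      mt (exists_isWEnd_sConn_iff h₁' h₂' hI).mpr hwall, fun j hj₁ hj₂ hij => ?_⟩,
      by omega⟩
    have hij' := hij.map_succPt h₁' h₂'
    rw [show succPt (false, i - 1) = (false, i) from succPt_predPt hI] at hij'
    have := hmin (j + 1) (by omega) (by omega) hij'
    omega
  · rintro ⟨i, ⟨hi₁, hi₂, htouch, hwall, hmin⟩, rfl⟩
    have hI : IsInnerPt n (false, i + 1) := ⟨by dsimp only; omega, by dsimp only; omega⟩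
    refine ⟨by omega, by omega, mt (touchesBd_iff_predPt h₁' h₂' hI).mp htouch,
      mt (exists_isWEnd_sConn_iff h₁' h₂' hI).mp hwall, fun j hj₁ hj₂ hij => ?_⟩
    have hj : j ≤ 2 * n := ((hij.isInnerPt_iff h₁' h₂').mp hI).2
    have := hmin (j - 1) (by omega) (by omega) (hij.map_predPt h₁' h₂' hI)
    omega

end Coefficients

theorem wCoeff_shrink {n : ℕ} {D1 D2 : StripDiagram (n + 1)}
    (h₁ : WBasic (n + 1) D1 ∧ CupCap (n + 1) D1)
    (h₂ : WBasic (n + 1) D2 ∧ CupCap (n + 1) D2) {k : Type} [Field k] (δ δe κ : k)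
    (hδe : δe ≠ 0) :
    δe⁻¹ * wCoeff δ δe κ (n + 1) D1 D2 =
      wCoeff δ κ δe n (shrink (n + 1) D1) (shrink (n + 1) D2) := by
  rw [wCoeff, wCoeff, nLoops_shrink h₁ h₂, nWWwhite_shrink h₁ h₂, nWWblack_shrink h₁ h₂,
    pow_succ]
  field_simp

theorem stmt12 (m : ℕ) (hm : 1 ≤ m) (k : Type) [Field k]
    (δ δe κ : k) (hδe : δe ≠ 0) :
    ∃ ρ : {D : StripDiagram m // WBasic m D ∧ CupCap m D} →
        {D' : StripDiagram (m - 1) // WBasic (m - 1) D'},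
      (∀ D, (ρ D).1 = shrink m D.1) ∧
      Function.Bijective ρ ∧
      ∀ D1 D2 : {D : StripDiagram m // WBasic m D ∧ CupCap m D},
        shrink m (compStrip m D1.1 D2.1)
            = compStrip (m - 1) (shrink m D1.1) (shrink m D2.1) ∧
        δe⁻¹ * wCoeff δ δe κ m D1.1 D2.1
            = wCoeff δ κ δe (m - 1) (shrink m D1.1) (shrink m D2.1) := by
  obtain ⟨n, rfl⟩ := Nat.exists_eq_add_of_le' hm
  refine ⟨fun D => ⟨shrink (n + 1) D.1, wBasic_shrink D.2.1 D.2.2⟩, fun _ => rfl, ?_,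
    fun D1 D2 => ⟨compStrip_shrink D1.2 D2.2, wCoeff_shrink D1.2 D2.2 δ δe κ hδe⟩⟩
  refine bijective_iff_has_inverse.mpr
    ⟨fun D => ⟨expand n D.1, wBasic_expand D.2, expand_cupCap _⟩, fun D => ?_, fun D => ?_⟩
  · exact Subtype.ext (expand_shrink D.2.1 D.2.2)
  · exact Subtype.ext (shrink_expand D.2)
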